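/- Let x, y ∈ A_c satisfy |x_i − x_{i+1}| = x̆_- and |y_i − y_{i+1}| = y̆_- for some 1 ≤ i ≤ n−1. Then n_{i−}(x)·n_{i−}(y) ≥ 1 − 2|x − y|/(√3 r_-). Consequently, for any β ∈ (0,1), n_{i−}(x)·n_{i−}(y) ≥ √(1 − β²) as soon as |x − y| ≤ (r_- √3/2)(1 − √(1 − β²)), so D_{i−} = {x : |x_i − x_{i+1}| ≥ x̆_-} has the Uniform Normal Cone property restricted to A_c with any constant β ∈ (0,1) and δ = (r_- √3/4) β². -/

import Mathlib

open scoped RealInnerProductSpace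

noncomputable section

variable {H : Type*} [NormedAddCommGroup H] [InnerProductSpace ℝ H]

/-- The set `N^D_{x,α}` of inward unit normal vectors to `D` at `x` with constant `α`. -/
def normalSet (D : Set H) (x : H) (α : ℝ) : Set H :=
  {v | ‖v‖ = 1 ∧ Metric.ball (x - α • v) α ∩ D = ∅}

/-- The set `N^D_x = ⋃_{α>0} N^D_{x,α}` of inward unit normal vectors to `D` at `x`. -/
def normalCone (D : Set H) (x : H) : Set H :=
  ⋃ α ∈ Set.Ioi (0 : ℝ), normalSet D x α

/-- `D` satisfies the Uniform Exterior Sphere property with constant `α`. -/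
def UES (D : Set H) (α : ℝ) : Prop :=
  ∀ x ∈ frontier D, normalCone D x = normalSet D x α ∧ (normalSet D x α).Nonempty

/-- `D` satisfies the Uniform Normal Cone property with constants `β`, `δ`. -/
def UNC (D : Set H) (β δ : ℝ) : Prop :=
  ∀ x ∈ frontier D, ∃ l : H, ‖l‖ = 1 ∧
    ∀ y ∈ frontier D, ‖y - x‖ ≤ δ → ∀ v ∈ normalCone D y, ⟪v, l⟫ ≥ Real.sqrt (1 - β ^ 2)

/-- The configuration space `ℝ^{dn+2}` of chains of `n` particles in `ℝ^d` together with the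
minimum and maximum bond lengths `(x̆₋, x̆₊)`, carrying the Euclidean (`L²`) norm. -/
abbrev CConf (d n : ℕ) : Type :=
  WithLp 2 ((PiLp 2 fun _ : Fin n => EuclideanSpace ℝ (Fin d)) × WithLp 2 (ℝ × ℝ))

variable {d n : ℕ}

/-- Position of the `i`-th particle of the chain. -/
def cC (x : CConf d n) (i : Fin n) : EuclideanSpace ℝ (Fin d) := x.fst i

/-- Minimum allowed bond length `x̆₋`. -/
def cMin (x : CConf d n) : ℝ := x.snd.fst

/-- Maximum allowed bond length `x̆₊`. -/
def cMax (x : CConf d n) : ℝ := x.snd.snd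

/-- Build a chain configuration from particle positions and the two bond-length bounds. -/
def mkC (f : Fin n → EuclideanSpace ℝ (Fin d)) (a b : ℝ) : CConf d n :=
  (WithLp.equiv 2 _).symm ((WithLp.equiv 2 _).symm f, (WithLp.equiv 2 _).symm (a, b))

/-- The set `A_c` of allowed chain configurations. -/
def Ac (d n : ℕ) (rm rp : ℝ) : Set (CConf d n) :=
  {x | rm ≤ cMin x ∧ cMin x ≤ cMax x ∧ cMax x ≤ rp ∧
    ∀ (i : Fin n) (h : (i : ℕ) + 1 < n),
      cMin x ≤ ‖cC x i - cC x ⟨(i : ℕ) + 1, h⟩‖ ∧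
        ‖cC x i - cC x ⟨(i : ℕ) + 1, h⟩‖ ≤ cMax x}

/-- The unit normal vector `n_{i−}(x)` to the constraint `|x_i − x_{i+1}| ≥ x̆₋`, at a
configuration `x` with `|x_i − x_{i+1}| = x̆₋ > 0`. -/
def cnm (x : CConf d n) (i : Fin n) (h : (i : ℕ) + 1 < n) : CConf d n :=
  mkC (fun k =>
      if k = i then (cMin x * Real.sqrt 3)⁻¹ • (cC x i - cC x ⟨(i : ℕ) + 1, h⟩)
      else if k = ⟨(i : ℕ) + 1, h⟩ then
        (cMin x * Real.sqrt 3)⁻¹ • (cC x ⟨(i : ℕ) + 1, h⟩ - cC x i)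
      else 0)
    (-(Real.sqrt 3)⁻¹) 0

/-- The unit normal vector `n_{i+}(x)` to the constraint `|x_i − x_{i+1}| ≤ x̆₊`, at a
configuration `x` with `|x_i − x_{i+1}| = x̆₊ > 0`. -/
def cnp (x : CConf d n) (i : Fin n) (h : (i : ℕ) + 1 < n) : CConf d n :=
  mkC (fun k =>
      if k = i then (cMax x * Real.sqrt 3)⁻¹ • (cC x ⟨(i : ℕ) + 1, h⟩ - cC x i)
      else if k = ⟨(i : ℕ) + 1, h⟩ then
        (cMax x * Real.sqrt 3)⁻¹ • (cC x i - cC x ⟨(i : ℕ) + 1, h⟩)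
      else 0)
    0 (Real.sqrt 3)⁻¹

/-- The unit normal vector `n₋ = (0,…,0,1,0)` to the constraint `x̆₋ ≥ r₋`. -/
def cnmin (d n : ℕ) : CConf d n := mkC 0 1 0

/-- The unit normal vector `n₊ = (0,…,0,0,−1)` to the constraint `x̆₊ ≤ r₊`. -/
def cnmax (d n : ℕ) : CConf d n := mkC 0 0 (-1)

/-- The unit normal vector `n₌ = (0,…,0,−1/√2,1/√2)` to the constraint `x̆₋ ≤ x̆₊`. -/
def cneq (d n : ℕ) : CConf d n := mkC 0 (-(Real.sqrt 2)⁻¹) (Real.sqrt 2)⁻¹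

end

/-- The bond-length lower-bound constraint set `D_{i−} = {x : |x_i − x_{i+1}| ≥ x̆₋}`. -/
def Dim (d n : ℕ) (i : Fin n) (h : (i : ℕ) + 1 < n) : Set (CConf d n) :=
  {x | ‖cC x i - cC x ⟨(i : ℕ) + 1, h⟩‖ ≥ cMin x}

/-!
Writing `b(x) = x_i − x_{i+1}`, so that `|b(x)| = x̆₋`, one has
`n_{i−}(x)·n_{i−}(y) = 1 − (2/3) q` with `q = 1 − b(x)·b(y)/(x̆₋ y̆₋)`. The quantity `q` is at
most `2`, and also at most `|b(x) − b(y)|² / (2 x̆₋ y̆₋) ≤ |x − y|²/r₋²` because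
`|b(x) − b(y)|² ≤ 2 (|x_i − y_i|² + |x_{i+1} − y_{i+1}|²)`. Both bounds together give
`q ≤ √3 |x − y| / r₋`. For the uniform normal cone one takes `l = n_{i−}(x)` and uses
`√(1 − β²) ≤ 1 − β²/2`.
-/

lemma le_sqrt_three_mul_of_le_two_of_le_sq {q t : ℝ} (ht : 0 ≤ t) (hq2 : q ≤ 2)
    (hqt : q ≤ t ^ 2) : q ≤ √3 * t := by
  rcases le_total t √3 with hts | hts
  · calc q ≤ t * t := by rwa [← sq]
      _ ≤ √3 * t := mul_le_mul_of_nonneg_right hts ht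
  · calc q ≤ √3 * √3 := by rw [Real.mul_self_sqrt zero_le_three]; linarith
      _ ≤ √3 * t := mul_le_mul_of_nonneg_left hts (Real.sqrt_nonneg 3)

section ChainNormal

variable {d n : ℕ}

def bond (x : CConf d n) (i : Fin n) (h : (i : ℕ) + 1 < n) : EuclideanSpace ℝ (Fin d) :=
  cC x i - cC x ⟨(i : ℕ) + 1, h⟩

lemma inner_eq_sum_inner_cC (x y : CConf d n) :
    ⟪x, y⟫ = ∑ k, ⟪cC x k, cC y k⟫ + cMin x * cMin y + cMax x * cMax y := by
  rw [WithLp.prod_inner_apply, PiLp.inner_apply, WithLp.prod_inner_apply]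
  simp only [RCLike.inner_apply, conj_trivial, mul_comm (cMin x), mul_comm (cMax x), add_assoc]
  rfl

lemma cC_sub (x y : CConf d n) (k : Fin n) : cC (x - y) k = cC x k - cC y k := rfl

lemma bond_sub (x y : CConf d n) (i : Fin n) (h : (i : ℕ) + 1 < n) :
    bond (x - y) i h = bond x i h - bond y i h := by
  simp only [bond, cC_sub]
  abel

lemma sq_norm_cC_add_sq_norm_cC_le {j k : Fin n} (hjk : j ≠ k) (z : CConf d n) :
    ‖cC z j‖ ^ 2 + ‖cC z k‖ ^ 2 ≤ ‖z‖ ^ 2 := by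
  have hsum : ‖cC z j‖ ^ 2 + ‖cC z k‖ ^ 2 ≤ ∑ l, ‖cC z l‖ ^ 2 := by
    rw [← Finset.sum_pair (f := fun l => ‖cC z l‖ ^ 2) hjk]
    exact Finset.sum_le_sum_of_subset_of_nonneg (Finset.subset_univ _)
      fun _ _ _ => sq_nonneg _
  have hz := inner_eq_sum_inner_cC z z
  simp only [real_inner_self_eq_norm_sq] at hz
  nlinarith [mul_self_nonneg (cMin z), mul_self_nonneg (cMax z)]

lemma sq_norm_bond_le (z : CConf d n) (i : Fin n) (h : (i : ℕ) + 1 < n) :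
    ‖bond z i h‖ ^ 2 ≤ 2 * ‖z‖ ^ 2 := by
  have hne : i ≠ ⟨(i : ℕ) + 1, h⟩ := Fin.ne_of_val_ne (Nat.succ_ne_self _).symm
  calc ‖bond z i h‖ ^ 2 ≤ (‖cC z i‖ + ‖cC z ⟨(i : ℕ) + 1, h⟩‖) ^ 2 :=
        pow_le_pow_left₀ (norm_nonneg _) (norm_sub_le _ _) 2
    _ ≤ 2 * (‖cC z i‖ ^ 2 + ‖cC z ⟨(i : ℕ) + 1, h⟩‖ ^ 2) := add_sq_le
    _ ≤ 2 * ‖z‖ ^ 2 := by gcongr; exact sq_norm_cC_add_sq_norm_cC_le hne z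

variable (x : CConf d n) (i : Fin n) (h : (i : ℕ) + 1 < n)

lemma cC_cnm_self : cC (cnm x i h) i = (cMin x * √3)⁻¹ • bond x i h := if_pos rfl

lemma cC_cnm_succ :
    cC (cnm x i h) ⟨(i : ℕ) + 1, h⟩ = -((cMin x * √3)⁻¹ • bond x i h) := by
  have hne : (⟨(i : ℕ) + 1, h⟩ : Fin n) ≠ i := Fin.ne_of_val_ne (Nat.succ_ne_self _)
  change ite _ _ (ite _ _ _) = _
  rw [if_neg hne, if_pos rfl, bond, ← smul_neg, neg_sub]

lemma cC_cnm_of_ne {k : Fin n} (hki : k ≠ i) (hki' : k ≠ ⟨(i : ℕ) + 1, h⟩) :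
    cC (cnm x i h) k = 0 := by
  change ite _ _ (ite _ _ _) = _
  rw [if_neg hki, if_neg hki']

lemma inner_cnm_cnm (y : CConf d n) :
    ⟪cnm x i h, cnm y i h⟫ = (2 * ⟪bond x i h, bond y i h⟫ / (cMin x * cMin y) + 1) / 3 := by
  have hne : i ≠ ⟨(i : ℕ) + 1, h⟩ := Fin.ne_of_val_ne (Nat.succ_ne_self _).symm
  rw [inner_eq_sum_inner_cC, Fintype.sum_eq_add _ _ hne fun k hk => by
    rw [cC_cnm_of_ne x i h hk.1 hk.2, inner_zero_left]]
  rw [cC_cnm_self, cC_cnm_self, cC_cnm_succ, cC_cnm_succ, inner_neg_neg,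
    real_inner_smul_left, real_inner_smul_right]
  change _ + -(√3)⁻¹ * -(√3)⁻¹ + 0 * 0 = _
  simp only [mul_inv]
  ring_nf
  rw [inv_pow, Real.sq_sqrt zero_le_three]
  ring

lemma norm_cnm (hx : ‖bond x i h‖ = cMin x) (hx0 : cMin x ≠ 0) : ‖cnm x i h‖ = 1 := by
  have hsq : ‖cnm x i h‖ ^ 2 = 1 := by
    rw [← real_inner_self_eq_norm_sq, inner_cnm_cnm, real_inner_self_eq_norm_sq, hx]
    field_simp
    norm_num
  exact (pow_eq_one_iff_of_nonneg (norm_nonneg _) two_ne_zero).mp hsq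

variable {x i h} {rm : ℝ} {y : CConf d n}

theorem one_sub_le_inner_cnm (h0 : 0 < rm) (hmx : rm ≤ cMin x) (hmy : rm ≤ cMin y)
    (hx : ‖bond x i h‖ = cMin x) (hy : ‖bond y i h‖ = cMin y) :
    1 - 2 * ‖x - y‖ / (√3 * rm) ≤ ⟪cnm x i h, cnm y i h⟫ := by
  set P := cMin x * cMin y
  set c := ⟪bond x i h, bond y i h⟫
  have hP : 0 < P := by positivity [h0.trans_le hmx, h0.trans_le hmy]
  have hc : -P ≤ c := by
    have := abs_real_inner_le_norm (bond x i h) (bond y i h)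
    rw [hx, hy] at this
    exact neg_le_of_abs_le this
  -- `|b(x) - b(y)|² = x̆₋² + y̆₋² - 2c ≥ 2 (P - c)`
  have hPc : 2 * (P - c) ≤ 2 * ‖x - y‖ ^ 2 := by
    have hb := sq_norm_bond_le (x - y) i h
    rw [bond_sub, norm_sub_sq_real, hx, hy] at hb
    nlinarith [sq_nonneg (cMin x - cMin y)]
  have hq2 : (P - c) / P ≤ 2 := by rw [div_le_iff₀ hP]; linarith
  have hqt : (P - c) / P ≤ (‖x - y‖ / rm) ^ 2 := by
    rw [div_pow, div_le_div_iff₀ hP (by positivity)]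
    have : rm ^ 2 ≤ P := by nlinarith
    nlinarith [sq_nonneg ‖x - y‖]
  have hq := le_sqrt_three_mul_of_le_two_of_le_sq (by positivity) hq2 hqt
  have hinner : ⟪cnm x i h, cnm y i h⟫ = 1 - 2 / 3 * ((P - c) / P) := by
    rw [inner_cnm_cnm]
    change (2 * c / P + 1) / 3 = _
    field_simp
    ring
  calc 1 - 2 * ‖x - y‖ / (√3 * rm) = 1 - 2 / 3 * (√3 * (‖x - y‖ / rm)) := by
        field_simp
        linear_combination 2 * ‖x - y‖ * Real.mul_self_sqrt zero_le_three
    _ ≤ _ := by rw [hinner]; linarith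

theorem le_inner_cnm_of_norm_sub_le (h0 : 0 < rm) (hmx : rm ≤ cMin x) (hmy : rm ≤ cMin y)
    (hx : ‖bond x i h‖ = cMin x) (hy : ‖bond y i h‖ = cMin y) {s : ℝ}
    (hxy : ‖x - y‖ ≤ rm * √3 / 2 * (1 - s)) : s ≤ ⟪cnm x i h, cnm y i h⟫ := by
  refine le_trans ?_ (one_sub_le_inner_cnm h0 hmx hmy hx hy)
  rw [le_sub_comm, div_le_iff₀ (by positivity)]
  linarith

theorem sqrt_one_sub_sq_le_inner_cnm (h0 : 0 < rm) (hmx : rm ≤ cMin x) (hmy : rm ≤ cMin y)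
    (hx : ‖bond x i h‖ = cMin x) (hy : ‖bond y i h‖ = cMin y) {β : ℝ} (hβ : β ^ 2 ≤ 1)
    (hxy : ‖x - y‖ ≤ rm * √3 / 4 * β ^ 2) : √(1 - β ^ 2) ≤ ⟪cnm x i h, cnm y i h⟫ := by
  refine le_inner_cnm_of_norm_sub_le h0 hmx hmy hx hy (hxy.trans ?_)
  have hsqrt : √(1 - β ^ 2) ≤ 1 - β ^ 2 / 2 := by
    simpa [sub_eq_add_neg, neg_div] using Real.sqrt_one_add_le (neg_le_neg hβ)
  have : 0 ≤ rm * √3 := by positivity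
  nlinarith

end ChainNormal

theorem stmt_19_general (d n : ℕ) (rm rp : ℝ)
    (h0 : 0 < rm) (i : Fin n) (h : (i : ℕ) + 1 < n)
    (x y : CConf d n) (hx : x ∈ Ac d n rm rp) (hy : y ∈ Ac d n rm rp)
    (hcx : ‖cC x i - cC x ⟨(i : ℕ) + 1, h⟩‖ = cMin x)
    (hcy : ‖cC y i - cC y ⟨(i : ℕ) + 1, h⟩‖ = cMin y) :
    ⟪cnm x i h, cnm y i h⟫ ≥ 1 - 2 * ‖x - y‖ / (Real.sqrt 3 * rm) ∧
    (∀ β ∈ Set.Ioo (0 : ℝ) 1,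
      ‖x - y‖ ≤ rm * Real.sqrt 3 / 2 * (1 - Real.sqrt (1 - β ^ 2)) →
        ⟪cnm x i h, cnm y i h⟫ ≥ Real.sqrt (1 - β ^ 2)) ∧
    (∀ β ∈ Set.Ioo (0 : ℝ) 1, ∀ x' ∈ Ac d n rm rp,
      ‖cC x' i - cC x' ⟨(i : ℕ) + 1, h⟩‖ = cMin x' →
        ∃ l : CConf d n, ‖l‖ = 1 ∧
          ∀ y' ∈ Ac d n rm rp, ‖cC y' i - cC y' ⟨(i : ℕ) + 1, h⟩‖ = cMin y' →
            ‖y' - x'‖ ≤ rm * Real.sqrt 3 / 4 * β ^ 2 →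
              ⟪cnm y' i h, l⟫ ≥ Real.sqrt (1 - β ^ 2)) := by
  refine ⟨one_sub_le_inner_cnm h0 hx.1 hy.1 hcx hcy,
    fun β _ hxy => le_inner_cnm_of_norm_sub_le h0 hx.1 hy.1 hcx hcy hxy,
    fun β hβ x' hx' hcx' => ⟨cnm x' i h, norm_cnm x' i h hcx' (h0.trans_le hx'.1).ne', ?_⟩⟩
  intro y' hy' hcy' hδ
  exact sqrt_one_sub_sq_le_inner_cnm h0 hy'.1 hx'.1 hcy' hcx' (pow_le_one₀ hβ.1.le hβ.2.le) hδ

/-- For `x, y ∈ A_c` with `|x_i − x_{i+1}| = x̆₋` and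
`|y_i − y_{i+1}| = y̆₋`, one has `n_{i−}(x)·n_{i−}(y) ≥ 1 − 2|x−y|/(√3 r₋)`; consequently,
for any `β ∈ (0,1)`, `n_{i−}(x)·n_{i−}(y) ≥ √(1−β²)` as soon as
`|x−y| ≤ (r₋√3/2)(1 − √(1−β²))`, so `D_{i−}` has the Uniform Normal Cone property restricted
to `A_c` with any constant `β ∈ (0,1)` and `δ = (r₋√3/4)β²`. -/
theorem stmt_19 (d n : ℕ) (hd : 2 ≤ d) (hn : 2 ≤ n) (rm rp : ℝ)
    (h0 : 0 < rm) (hr : rm < rp) (i : Fin n) (h : (i : ℕ) + 1 < n)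
    (x y : CConf d n) (hx : x ∈ Ac d n rm rp) (hy : y ∈ Ac d n rm rp)
    (hcx : ‖cC x i - cC x ⟨(i : ℕ) + 1, h⟩‖ = cMin x)
    (hcy : ‖cC y i - cC y ⟨(i : ℕ) + 1, h⟩‖ = cMin y) :
    ⟪cnm x i h, cnm y i h⟫ ≥ 1 - 2 * ‖x - y‖ / (Real.sqrt 3 * rm) ∧
    (∀ β ∈ Set.Ioo (0 : ℝ) 1,
      ‖x - y‖ ≤ rm * Real.sqrt 3 / 2 * (1 - Real.sqrt (1 - β ^ 2)) →
        ⟪cnm x i h, cnm y i h⟫ ≥ Real.sqrt (1 - β ^ 2)) ∧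
    (∀ β ∈ Set.Ioo (0 : ℝ) 1, ∀ x' ∈ Ac d n rm rp,
      ‖cC x' i - cC x' ⟨(i : ℕ) + 1, h⟩‖ = cMin x' →
        ∃ l : CConf d n, ‖l‖ = 1 ∧
          ∀ y' ∈ Ac d n rm rp, ‖cC y' i - cC y' ⟨(i : ℕ) + 1, h⟩‖ = cMin y' →
            ‖y' - x'‖ ≤ rm * Real.sqrt 3 / 4 * β ^ 2 →
              ⟪cnm y' i h, l⟫ ≥ Real.sqrt (1 - β ^ 2)) :=
  stmt_19_general d n rm rp h0 i h x y hx hy hcx hcy
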